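/- Let n = 2m be even, let q be an integer with 0 ≤ q ≤ m, and let 1 ≤ i ≤ n+1. For c ∈ B(n,q), one has |Γ_q^{(A)}(c)| = i if and only if max_{0≤j≤n} R(c)_j − min_{0≤j≤n} R(c)_j = i − 1 (i.e., the lattice path of c has width exactly i − 1). -/

import Mathlib

/-- The Hamming weight of a binary word `x ∈ {0,1}^N`: the number of ones. -/
def wt {N : ℕ} (x : Fin N → Bool) : ℕ :=
  (Finset.univ.filter (fun i => x i = true)).card

/-- `Flip x j` complements the first `j` bits of `x`. -/
def Flip {N : ℕ} (x : Fin N → Bool) (j : ℕ) : Fin N → Bool :=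
  fun i => if (i : ℕ) < j then !(x i) else x i

/-- The running sum `R(x)`: `R(x)₀ = 0` and `R(x)ᵢ = R(x)_{i−1} ± 1`
according to whether the `i`-th bit is `1` or `0`. -/
def RS {N : ℕ} (x : Fin N → Bool) : ℕ → ℤ
  | 0 => 0
  | i + 1 => RS x i + if h : i < N then (if x ⟨i, h⟩ then 1 else -1) else 0

/-- `Γ_q^{(A)}(c)`: the set of indices `j ∈ {0,…,2m}` such that the word
`x = Flip(c,j)` satisfies `T(x,q) ≠ ∅` and `min T(x,q) = j`. -/
def GammaA (m q : ℕ) (c : Fin (2*m) → Bool) : Set ℕ :=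
  {j | j ≤ 2*m ∧ wt (Flip (Flip c j) j) = m + q ∧
    ∀ j' ≤ 2*m, wt (Flip (Flip c j) j') = m + q → j ≤ j'}


/-!
Flipping the first `j` bits of a word lowers its weight by its running sum `R_j`. Hence for
`c ∈ B(n,q)` the word `Flip(Flip(c,j),j')` lies in `B(n,q)` exactly when `R(c)_{j'} = R(c)_j`, so
`Γ_q^{(A)}(c)` is the set of indices at which `R(c)` takes a value for the first time, and its size
is the number of values of `R(c)` on `{0,…,n}`. As `R(c)` moves by steps of `±1`, these values
fill the whole integer interval between its minimum and maximum.
-/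

def bitSign {N : ℕ} (x : Fin N → Bool) (i : ℕ) : ℤ :=
  if h : i < N then (if x ⟨i, h⟩ then 1 else -1) else 0

lemma RS_succ {N : ℕ} (x : Fin N → Bool) (j : ℕ) : RS x (j + 1) = RS x j + bitSign x j := rfl

lemma RS_eq_sum {N : ℕ} (x : Fin N → Bool) (j : ℕ) :
    RS x j = ∑ i ∈ Finset.range j, bitSign x i := by
  induction j with
  | zero => rfl
  | succ j ih => rw [Finset.sum_range_succ, ← ih, RS_succ]

lemma abs_RS_succ_sub_le {N : ℕ} (x : Fin N → Bool) (j : ℕ) : |RS x (j + 1) - RS x j| ≤ 1 := by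
  rw [RS_succ, add_sub_cancel_left, bitSign]
  split_ifs <;> simp

lemma Flip_Flip_self {N : ℕ} (x : Fin N → Bool) (j : ℕ) : Flip (Flip x j) j = x := by
  funext i
  simp only [Flip]
  split_ifs <;> simp

lemma bitSign_Flip_of_lt {N : ℕ} (x : Fin N → Bool) {j k : ℕ} (hk : k < j) :
    bitSign (Flip x j) k = -bitSign x k := by
  unfold bitSign Flip
  split_ifs <;> simp_all

lemma bitSign_Flip_of_le {N : ℕ} (x : Fin N → Bool) {j k : ℕ} (hk : j ≤ k) :
    bitSign (Flip x j) k = bitSign x k := by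
  by_cases h : k < N
  · simp [bitSign, Flip, h, not_lt.2 hk]
  · simp [bitSign, h]

lemma RS_Flip_of_le {N : ℕ} (x : Fin N → Bool) {j j' : ℕ} (h : j' ≤ j) :
    RS (Flip x j) j' = -RS x j' := by
  induction j' with
  | zero => rfl
  | succ k ih => rw [RS_succ, RS_succ, ih (by omega), bitSign_Flip_of_lt x (by omega)]; ring

lemma RS_Flip_of_ge {N : ℕ} (x : Fin N → Bool) {j j' : ℕ} (h : j ≤ j') :
    RS (Flip x j) j' = RS x j' - 2 * RS x j := by
  induction j', h using Nat.le_induction with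
  | base => rw [RS_Flip_of_le x le_rfl]; ring
  | succ k hk ih => rw [RS_succ, RS_succ, ih, bitSign_Flip_of_le x hk]; ring

lemma wt_eq_sum {N : ℕ} (x : Fin N → Bool) :
    (wt x : ℤ) = ∑ i, if x i then 1 else 0 := by
  rw [wt, Finset.card_filter]
  push_cast
  rfl

lemma wt_Flip {N : ℕ} (x : Fin N → Bool) {j : ℕ} (hj : j ≤ N) :
    (wt (Flip x j) : ℤ) = wt x - RS x j := by
  have hbit : ∀ i : Fin N, (if Flip x j i then (1 : ℤ) else 0)
      = (if x i then 1 else 0) - if (i : ℕ) < j then bitSign x i else 0 := by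
    intro i
    by_cases h : (i : ℕ) < j
    · simp only [Flip, bitSign, if_pos h, dif_pos i.isLt, Fin.eta]
      cases x i <;> simp
    · simp [Flip, h]
  have hprefix : ∑ i : Fin N, (if (i : ℕ) < j then bitSign x i else 0) = RS x j := by
    rw [Fin.sum_univ_eq_sum_range (fun i => if i < j then bitSign x i else 0), ← Finset.sum_filter,
      RS_eq_sum]
    congr 1
    ext i
    simp only [Finset.mem_filter, Finset.mem_range]
    omega
  rw [wt_eq_sum, wt_eq_sum, Finset.sum_congr rfl fun i _ => hbit i, Finset.sum_sub_distrib,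
    hprefix]

lemma wt_Flip_Flip_eq_iff {N : ℕ} (x : Fin N → Bool) {j j' : ℕ} (hj : j ≤ N) (hj' : j' ≤ N) :
    wt (Flip (Flip x j) j') = wt x ↔ RS x j' = RS x j := by
  have hwt : (wt (Flip (Flip x j) j') : ℤ) = wt x - RS x j - RS (Flip x j) j' := by
    rw [wt_Flip _ hj', wt_Flip _ hj]
  rw [← Nat.cast_inj (R := ℤ), hwt]
  rcases le_total j' j with h | h
  · rw [RS_Flip_of_le x h]; omega
  · rw [RS_Flip_of_ge x h]; omega

section FirstOccurrences

variable {α β : Type*} [LinearOrder α] [DecidableEq β]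

def firstOccurrences (s : Finset α) (f : α → β) : Finset α :=
  s.filter fun j => ∀ j' ∈ s, f j' = f j → j ≤ j'

lemma card_firstOccurrences (s : Finset α) (f : α → β) :
    (firstOccurrences s f).card = (s.image f).card := by
  have hinj : Set.InjOn f (firstOccurrences s f) := by
    intro j₁ h₁ j₂ h₂ he
    simp only [firstOccurrences, Finset.coe_filter, Set.mem_ofPred_eq] at h₁ h₂
    exact le_antisymm (h₁.2 j₂ h₂.1 he.symm) (h₂.2 j₁ h₁.1 he)
  rw [← Finset.card_image_of_injOn hinj]
  congr 1
  refine Finset.Subset.antisymm (Finset.image_subset_image (Finset.filter_subset _ _)) ?_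
  intro v hv
  obtain ⟨j₀, hj₀, rfl⟩ := Finset.mem_image.1 hv
  have hfiber : (s.filter fun j => f j = f j₀).Nonempty := ⟨j₀, by simp [hj₀]⟩
  obtain ⟨hfirst_mem, hfirst_eq⟩ :=
    Finset.mem_filter.1 ((s.filter fun j => f j = f j₀).min'_mem hfiber)
  refine Finset.mem_image.2 ⟨_, Finset.mem_filter.2 ⟨hfirst_mem, fun j' hj' he => ?_⟩, hfirst_eq⟩
  exact Finset.min'_le _ _ (Finset.mem_filter.2 ⟨hj', he.trans hfirst_eq⟩)

end FirstOccurrences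

lemma ncard_GammaA {m q : ℕ} {c : Fin (2 * m) → Bool} (hc : wt c = m + q) :
    (GammaA m q c).ncard = ((Finset.Iic (2 * m)).image (RS c)).card := by
  rw [← card_firstOccurrences, ← Set.ncard_coe_finset]
  congr 1
  ext j
  simp only [GammaA, firstOccurrences, Finset.coe_filter, Finset.mem_Iic, Set.mem_ofPred_eq,
    Flip_Flip_self, hc, true_and]
  refine and_congr_right fun hj => forall₂_congr fun j' hj' => ?_
  rw [← hc, wt_Flip_Flip_eq_iff c hj hj']

lemma exists_bounds_attained {β : Type*} [LinearOrder β] (g : ℕ → β) (n : ℕ) :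
    ∃ a b : β, (∀ j ≤ n, a ≤ g j ∧ g j ≤ b) ∧ (∃ j ≤ n, g j = a) ∧ (∃ j ≤ n, g j = b) := by
  have hne : (Finset.Iic n).Nonempty := ⟨0, Finset.mem_Iic.2 n.zero_le⟩
  obtain ⟨jmin, hjmin, hmin⟩ := (Finset.Iic n).exists_min_image g hne
  obtain ⟨jmax, hjmax, hmax⟩ := (Finset.Iic n).exists_max_image g hne
  rw [Finset.mem_Iic] at hjmin hjmax
  exact ⟨g jmin, g jmax, fun j hj => ⟨hmin j (Finset.mem_Iic.2 hj), hmax j (Finset.mem_Iic.2 hj)⟩,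
    ⟨jmin, hjmin, rfl⟩, ⟨jmax, hjmax, rfl⟩⟩

section StepFunction

variable {f : ℕ → ℤ}

lemma exists_eq_of_abs_sub_le_one_of_le (hf : ∀ j, |f (j + 1) - f j| ≤ 1) {k l : ℕ} (hkl : k ≤ l)
    {v : ℤ} (hk : f k ≤ v) (hl : v ≤ f l) : ∃ j, k ≤ j ∧ j ≤ l ∧ f j = v := by
  induction l, hkl using Nat.le_induction with
  | base => exact ⟨k, le_rfl, le_rfl, le_antisymm hk hl⟩
  | succ l hkl ih =>
    by_cases hv : v ≤ f l
    · obtain ⟨j, hkj, hjl, hj⟩ := ih hv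
      exact ⟨j, hkj, hjl.trans l.le_succ, hj⟩
    · have hstep := (abs_sub_le_iff.1 (hf l)).1
      exact ⟨l + 1, by omega, le_rfl, by omega⟩

lemma exists_eq_of_abs_sub_le_one (hf : ∀ j, |f (j + 1) - f j| ≤ 1) {k l : ℕ} {v : ℤ}
    (hk : f k ≤ v) (hl : v ≤ f l) : ∃ j ≤ max k l, f j = v := by
  rcases le_total k l with hkl | hlk
  · obtain ⟨j, -, hj, hfj⟩ := exists_eq_of_abs_sub_le_one_of_le hf hkl hk hl
    exact ⟨j, hj.trans (le_max_right k l), hfj⟩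
  · have hf' : ∀ j, |-f (j + 1) - -f j| ≤ 1 := fun j => by
      rw [neg_sub_neg, abs_sub_comm]
      exact hf j
    obtain ⟨j, -, hj, hfj⟩ :=
      exists_eq_of_abs_sub_le_one_of_le (f := fun j => -f j) hf' hlk (neg_le_neg hl) (neg_le_neg hk)
    exact ⟨j, hj.trans (le_max_left k l), neg_inj.1 hfj⟩

lemma image_Iic_eq_Icc_of_abs_sub_le_one (hf : ∀ j, |f (j + 1) - f j| ≤ 1) {n : ℕ} {a b : ℤ}
    (hbound : ∀ j ≤ n, a ≤ f j ∧ f j ≤ b) (ha : ∃ j ≤ n, f j = a) (hb : ∃ j ≤ n, f j = b) :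
    (Finset.Iic n).image f = Finset.Icc a b := by
  obtain ⟨ja, hja, rfl⟩ := ha
  obtain ⟨jb, hjb, rfl⟩ := hb
  ext v
  simp only [Finset.mem_image, Finset.mem_Iic, Finset.mem_Icc]
  constructor
  · rintro ⟨j, hj, rfl⟩
    exact hbound j hj
  · rintro ⟨hav, hvb⟩
    obtain ⟨j, hj, hfj⟩ := exists_eq_of_abs_sub_le_one hf hav hvb
    exact ⟨j, hj.trans (max_le hja hjb), hfj⟩

end StepFunction

theorem stmt7_general (m q : ℕ) (i : ℕ)
    (c : Fin (2*m) → Bool) (hc : wt c = m + q) :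
    Set.ncard (GammaA m q c) = i ↔
    ∃ a b : ℤ, (∀ j ≤ 2*m, a ≤ RS c j ∧ RS c j ≤ b) ∧
      (∃ j ≤ 2*m, RS c j = a) ∧ (∃ j ≤ 2*m, RS c j = b) ∧ b - a = (i : ℤ) - 1 := by
  have hcard : ∀ a b : ℤ, (∀ j ≤ 2*m, a ≤ RS c j ∧ RS c j ≤ b) → (∃ j ≤ 2*m, RS c j = a) →
      (∃ j ≤ 2*m, RS c j = b) → Set.ncard (GammaA m q c) = (b + 1 - a).toNat :=
    fun a b hbound ha hb => by
      rw [ncard_GammaA hc, image_Iic_eq_Icc_of_abs_sub_le_one (abs_RS_succ_sub_le c) hbound ha hb,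
        Int.card_Icc]
  constructor
  · intro hi
    obtain ⟨a, b, hbound, ha, hb⟩ := exists_bounds_attained (RS c) (2 * m)
    have hab := hbound 0 (Nat.zero_le _)
    rw [hcard a b hbound ha hb] at hi
    exact ⟨a, b, hbound, ha, hb, by omega⟩
  · rintro ⟨a, b, hbound, ha, hb, hab⟩
    rw [hcard a b hbound ha hb]
    omega

/-- for `c ∈ B(n,q)` and `1 ≤ i ≤ n+1`, `|Γ_q^{(A)}(c)| = i` iff
`max_{0≤j≤n} R(c)_j − min_{0≤j≤n} R(c)_j = i − 1`. -/
theorem stmt7 (m q : ℕ) (hq : q ≤ m) (i : ℕ) (hi1 : 1 ≤ i) (hi2 : i ≤ 2*m + 1)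
    (c : Fin (2*m) → Bool) (hc : wt c = m + q) :
    Set.ncard (GammaA m q c) = i ↔
    ∃ a b : ℤ, (∀ j ≤ 2*m, a ≤ RS c j ∧ RS c j ≤ b) ∧
      (∃ j ≤ 2*m, RS c j = a) ∧ (∃ j ≤ 2*m, RS c j = b) ∧ b - a = (i : ℤ) - 1 :=
  stmt7_general m q i c hc
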